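/- Assume q_∞ ≠ 1. Let φ = Σ_{p=1}^{n−1} c_p·[U_p] ∈ V satisfy d(φ) = 0, and assume c_p = 0 for every p such that H_p and H_{p+1} are not parallel. If H_i and H_{i+1} are parallel and the band bounded by H_i and H_{i+1} is not resonant, then c_i = 0. -/

import Mathlib

open scoped Classical

noncomputable section

abbrev Pt : Type := ℝ × ℝ

/-- An affine-linear functional `a*x + b*y + c` on `ℝ²` with nonzero linear part. -/
structure AffForm : Type where
  a : ℝ
  b : ℝ
  c : ℝ
  nondeg : a ≠ 0 ∨ b ≠ 0

namespace AffForm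

def eval (f : AffForm) (p : Pt) : ℝ := f.a * p.1 + f.b * p.2 + f.c

def line (f : AffForm) : Set Pt := {p | f.eval p = 0}

def Parallel (f g : AffForm) : Prop := f.a * g.b = f.b * g.a

end AffForm

variable {n : ℕ}

/-- An arrangement: at least two distinct affine lines, not all parallel. -/
def IsArrangement (α : Fin n → AffForm) : Prop :=
  2 ≤ n ∧ (∀ i j : Fin n, i ≠ j → (α i).line ≠ (α j).line) ∧
    ∃ i j : Fin n, ¬ (α i).Parallel (α j)

def complement (α : Fin n → AffForm) : Set Pt := {p | ∀ i, (α i).eval p ≠ 0}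

/-- A chamber: a connected component of the complement of the union of the lines. -/
def IsChamber (α : Fin n → AffForm) (C : Set Pt) : Prop :=
  ∃ p ∈ complement α, C = connectedComponentIn (complement α) p

/-- `Sep(C, C')`: the set of indices `i` such that `α i` is positive on one of `C, C'`
and negative on the other. -/
def SepSet (α : Fin n → AffForm) (C C' : Set Pt) : Finset (Fin n) :=
  Finset.univ.filter fun i =>
    ((∀ p ∈ C, 0 < (α i).eval p) ∧ (∀ p ∈ C', (α i).eval p < 0)) ∨
    ((∀ p ∈ C, (α i).eval p < 0) ∧ (∀ p ∈ C', 0 < (α i).eval p))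

/-- `Δ(C, C') = ∏_{i ∈ Sep(C,C')} r i − ∏_{i ∈ Sep(C,C')} (r i)⁻¹`. -/
def Delta (α : Fin n → AffForm) (r : Fin n → ℂ) (C C' : Set Pt) : ℂ :=
  (∏ i ∈ SepSet α C C', r i) - ∏ i ∈ SepSet α C C', (r i)⁻¹

/-- The open strip between two parallel lines `f.line` and `g.line`. -/
def Strip (f g : AffForm) : Set Pt :=
  {p | ∀ q ∈ g.line,
    (0 < f.eval p ∧ f.eval p < f.eval q) ∨ (f.eval q < f.eval p ∧ f.eval p < 0)}

/-- A band: the open strip between two parallel lines of the arrangement containing no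
other line of the arrangement parallel to them. -/
def IsBand (α : Fin n → AffForm) (B : Set Pt) : Prop :=
  ∃ i j : Fin n, i ≠ j ∧ (α i).Parallel (α j) ∧ B = Strip (α i) (α j) ∧
    ∀ k : Fin n, (α k).Parallel (α i) → (α k).line ∩ B = ∅

/-- The data of a band `B` bounded by the parallel lines `H i` and `H j`, together with its
two unbounded chambers `U1` (= `U_1(B)`) and `U2` (= `U_2(B)`). -/
def BandData (α : Fin n → AffForm) (i j : Fin n) (B U1 U2 : Set Pt) : Prop :=
  i ≠ j ∧ (α i).Parallel (α j) ∧ B = Strip (α i) (α j) ∧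
  (∀ k : Fin n, (α k).Parallel (α i) → (α k).line ∩ B = ∅) ∧
  IsChamber α U1 ∧ IsChamber α U2 ∧ U1 ⊆ B ∧ U2 ⊆ B ∧
  ¬ Bornology.IsBounded U1 ∧ ¬ Bornology.IsBounded U2 ∧ U1 ≠ U2

/-- Coordinates as in the paper: every intersection point of two lines has `x₂ > 0`, line
`H i` meets the `x₁`-axis exactly at `(a i, 0)` with `0 < a 1 < … < a n`, and each
`α i` is negative at the origin. -/
def GoodCoords (α : Fin n → AffForm) (a : Fin n → ℝ) : Prop :=
  (∀ i j : Fin n, i ≠ j → ∀ p : Pt, p ∈ (α i).line → p ∈ (α j).line → 0 < p.2) ∧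
  (∀ i : Fin n, (α i).line ∩ {p : Pt | p.2 = 0} = {((a i : ℝ), (0 : ℝ))}) ∧
  StrictMono a ∧ (∀ i : Fin n, 0 < a i) ∧ ∀ i : Fin n, (α i).eval (0, 0) < 0

/-- `Upos α p = ∩_{i ≤ p} {α_i > 0} ∩ ∩_{i > p} {α_i < 0}` in the 1-indexed convention of
the paper: for `1 ≤ p ≤ n-1` it is the chamber `U_p`, `Upos α 0 = U_0`, and
`Upos α n = U_0^∨`. -/
def Upos (α : Fin n → AffForm) (p : ℕ) : Set Pt :=
  {x : Pt | ∀ i : Fin n, if (i : ℕ) < p then 0 < (α i).eval x else (α i).eval x < 0}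

/-- `ch²(A)`: the chambers other than `U_0, U_1, …, U_{n-1}, U_0^∨`. -/
def ch2 (α : Fin n → AffForm) (chambers : Finset (Set Pt)) : Finset (Set Pt) :=
  chambers.filter fun C => ∀ p ≤ n, C ≠ Upos α p

/-- `d([U_p]) = −Σ_{C ∈ ch², α_p > 0, α_{p+1} < 0 on C} Δ(U_p, C)·[C]
+ Σ_{C ∈ ch², α_p < 0, α_{p+1} > 0 on C} Δ(U_p, C)·[C]`, where `i`, `j` are the indices of
the lines `H_p`, `H_{p+1}` bounding `U_p` and `U = U_p`. -/
def dChain (α : Fin n → AffForm) (chambers : Finset (Set Pt)) (r : Fin n → ℂ)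
    (i j : Fin n) (U : Set Pt) : Set Pt →₀ ℂ :=
  -(∑ C ∈ (ch2 α chambers).filter
      (fun C => (∀ x ∈ C, 0 < (α i).eval x) ∧ ∀ x ∈ C, (α j).eval x < 0),
      Finsupp.single C (Delta α r U C)) +
  ∑ C ∈ (ch2 α chambers).filter
      (fun C => (∀ x ∈ C, (α i).eval x < 0) ∧ ∀ x ∈ C, 0 < (α j).eval x),
      Finsupp.single C (Delta α r U C)

/-!
Let `C` be the chamber reached far up the band `B` between the parallel lines `H_i, H_{i+1}`
(going along their direction from a point of the `x₁`-axis between `a_i` and `a_{i+1}`);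
going down instead stays in `U_i`, so `U_i` and `C` are the two unbounded chambers of `B`.
The signs of the `α_k` on `C` are explicit (see `topSigns`); in particular `C` is none of the
`U_p`, so `[C]` is a basis vector of `ℂ[ch²(A)]`. Its coefficient in `d(φ)` receives a term from
`[U_p]` only if `α_p, α_{p+1}` have opposite signs on `C`. For `p ≠ i` with `H_p ∥ H_{p+1}`
these two signs agree, and for `H_p ∦ H_{p+1}` we have `c_p = 0`; hence the coefficient is
`-c_i Δ(U_i, C)`, and non-resonance of `B` gives `c_i = 0`.
-/

open Filter Bornology

namespace AffForm

variable (f g h : AffForm)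

lemma continuous_eval : Continuous f.eval := by
  unfold eval
  fun_prop

def toAffineMap : Pt →ᵃ[ℝ] ℝ :=
  (f.a • LinearMap.fst ℝ ℝ ℝ + f.b • LinearMap.snd ℝ ℝ ℝ).toAffineMap +
    AffineMap.const ℝ Pt f.c

lemma coe_toAffineMap : ⇑f.toAffineMap = f.eval := by
  ext p
  simp [toAffineMap, eval]

lemma convex_setOf_eval_pos : Convex ℝ {p | 0 < f.eval p} := by
  have := (convex_Ioi (0 : ℝ)).affine_preimage f.toAffineMap
  rwa [coe_toAffineMap] at this

lemma convex_setOf_eval_neg : Convex ℝ {p | f.eval p < 0} := by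
  have := (convex_Iio (0 : ℝ)).affine_preimage f.toAffineMap
  rwa [coe_toAffineMap] at this

def dir : Pt := (-f.b, f.a)

lemma dir_ne_zero : f.dir ≠ 0 := by
  rcases f.nondeg with ha | hb
  · exact fun h => ha (congrArg Prod.snd h)
  · exact fun h => hb (neg_eq_zero.mp (congrArg Prod.fst h))

def cross : ℝ := f.b * g.a - f.a * g.b

lemma eval_add_smul_dir (p : Pt) (t : ℝ) :
    f.eval (p + t • g.dir) = f.eval p + t * f.cross g := by
  simp only [eval, dir, cross, Prod.fst_add, Prod.snd_add, Prod.smul_mk, smul_eq_mul]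
  ring

lemma cross_eq_zero_iff : f.cross g = 0 ↔ f.Parallel g := by
  unfold cross Parallel
  constructor <;> intro h <;> linarith

lemma Parallel.refl : f.Parallel f := mul_comm _ _

variable {f g h}

lemma Parallel.symm (hfg : f.Parallel g) : g.Parallel f := by
  unfold Parallel at *
  linarith

lemma Parallel.trans (hfg : f.Parallel g) (hgh : g.Parallel h) : f.Parallel h := by
  unfold Parallel at *
  rcases g.nondeg with ha | hb
  · exact mul_left_cancel₀ ha (by linear_combination f.a * hgh + h.a * hfg)
  · exact mul_left_cancel₀ hb (by linear_combination h.b * hfg + f.b * hgh)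

end AffForm

lemma IsArrangement.exists_not_parallel {α : Fin n → AffForm} (hA : IsArrangement α)
    (u : Fin n) : ∃ k, ¬ (α k).Parallel (α u) := by
  obtain ⟨j, k, hjk⟩ := hA.2.2
  by_contra! h
  exact hjk ((h j).trans (h k).symm)

lemma IsPreconnected.pos_of_pos {X : Type*} [TopologicalSpace X] {s : Set X} {g : X → ℝ}
    (hs : IsPreconnected s) (hg : ContinuousOn g s) (h0 : ∀ y ∈ s, g y ≠ 0) {x y : X}
    (hx : x ∈ s) (hy : y ∈ s) (hgx : 0 < g x) : 0 < g y := by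
  by_contra! hgy
  obtain ⟨z, hz, hgz⟩ := hs.intermediate_value hy hx hg ⟨hgy, hgx.le⟩
  exact h0 z hz hgz

lemma not_isBounded_of_eventually_mem {E : Type*} [NormedAddCommGroup E] [NormedSpace ℝ E]
    {s : Set E} {x v : E} (hv : v ≠ 0) (h : ∀ᶠ t : ℝ in atTop, x + t • v ∈ s) :
    ¬ IsBounded s := by
  intro hs
  have hsmul : Tendsto (fun t : ℝ => t • v) atTop (cobounded E) := by
    rw [← tendsto_norm_atTop_iff_cobounded]
    simpa [norm_smul] using tendsto_abs_atTop_atTop.atTop_mul_const (norm_pos_iff.mpr hv)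
  have hout := ((tendsto_const_add_cobounded x).comp hsmul).eventually hs
  obtain ⟨t, hts, htc⟩ := (h.and hout).exists
  exact htc hts

lemma eventually_pos_add_mul {c d : ℝ} (hd : 0 < d) : ∀ᶠ t : ℝ in atTop, 0 < c + t * d :=
  (tendsto_atTop_add_const_left _ c (tendsto_id.atTop_mul_const hd)).eventually_gt_atTop 0

lemma eventually_add_mul_neg {c d : ℝ} (hd : d < 0) : ∀ᶠ t : ℝ in atTop, c + t * d < 0 :=
  (eventually_pos_add_mul (c := -c) (neg_pos.mpr hd)).mono fun t ht => by linarith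

def SignSet (α : Fin n → AffForm) (ε : Fin n → Prop) : Set Pt :=
  {x | ∀ k, if ε k then 0 < (α k).eval x else (α k).eval x < 0}

section SignSet

variable {α : Fin n → AffForm} {ε ε' : Fin n → Prop} {x w : Pt}

lemma upos_eq_signSet (α : Fin n → AffForm) (p : ℕ) :
    Upos α p = SignSet α (fun k => (k : ℕ) < p) := by
  ext x
  simp only [Upos, SignSet, Set.mem_ofPred_eq]
  congr!

lemma eval_pos_iff_of_mem_signSet (hx : x ∈ SignSet α ε) (k : Fin n) :
    0 < (α k).eval x ↔ ε k := by
  have := hx k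
  by_cases hk : ε k <;> simp only [hk, if_true, if_false] at this <;> simp [hk, this, this.le]

lemma eval_neg_iff_of_mem_signSet (hx : x ∈ SignSet α ε) (k : Fin n) :
    (α k).eval x < 0 ↔ ¬ ε k := by
  have := hx k
  by_cases hk : ε k <;> simp only [hk, if_true, if_false] at this <;> simp [hk, this, this.le]

lemma signs_iff_of_mem_signSet (hx : x ∈ SignSet α ε) (hx' : x ∈ SignSet α ε') (k : Fin n) :
    ε k ↔ ε' k :=
  (eval_pos_iff_of_mem_signSet hx k).symm.trans (eval_pos_iff_of_mem_signSet hx' k)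

lemma forall_mem_signSet_eval_pos_iff (hw : w ∈ SignSet α ε) (k : Fin n) :
    (∀ x ∈ SignSet α ε, 0 < (α k).eval x) ↔ ε k :=
  ⟨fun h => (eval_pos_iff_of_mem_signSet hw k).mp (h w hw),
    fun hk _ hx => (eval_pos_iff_of_mem_signSet hx k).mpr hk⟩

lemma forall_mem_signSet_eval_neg_iff (hw : w ∈ SignSet α ε) (k : Fin n) :
    (∀ x ∈ SignSet α ε, (α k).eval x < 0) ↔ ¬ ε k :=
  ⟨fun h => (eval_neg_iff_of_mem_signSet hw k).mp (h w hw),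
    fun hk _ hx => (eval_neg_iff_of_mem_signSet hx k).mpr hk⟩

lemma signSet_subset_complement : SignSet α ε ⊆ complement α := fun x hx k => by
  by_cases hk : ε k
  · exact ((eval_pos_iff_of_mem_signSet hx k).mpr hk).ne'
  · exact ((eval_neg_iff_of_mem_signSet hx k).mpr hk).ne

lemma convex_signSet : Convex ℝ (SignSet α ε) := by
  rw [SignSet, Set.ofPred_forall]
  refine convex_iInter fun k => ?_
  split_ifs
  exacts [(α k).convex_setOf_eval_pos, (α k).convex_setOf_eval_neg]

lemma isChamber_signSet (hw : w ∈ SignSet α ε) : IsChamber α (SignSet α ε) := by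
  have hwc := signSet_subset_complement hw
  refine ⟨w, hwc, subset_antisymm
    (convex_signSet.isPreconnected.subset_connectedComponentIn hw signSet_subset_complement)
    fun x hx k => ?_⟩
  have hpre := isPreconnected_connectedComponentIn (F := complement α) (x := w)
  have hne : ∀ y ∈ connectedComponentIn (complement α) w, (α k).eval y ≠ 0 :=
    fun y hy => connectedComponentIn_subset _ _ hy k
  have hw' := mem_connectedComponentIn hwc
  have hcont := (α k).continuous_eval.continuousOn (s := connectedComponentIn (complement α) w)
  split_ifs with hk
  · exact hpre.pos_of_pos hcont hne hw' hx ((eval_pos_iff_of_mem_signSet hw k).mpr hk)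
  · exact neg_pos.mp (hpre.pos_of_pos hcont.neg (fun y hy => neg_ne_zero.mpr (hne y hy)) hw' hx
      (neg_pos.mpr ((eval_neg_iff_of_mem_signSet hw k).mpr hk)))

lemma dChain_apply (chambers : Finset (Set Pt)) (r : Fin n → ℂ) (I J : Fin n) (U X : Set Pt) :
    dChain α chambers r I J U X =
      -(if X ∈ (ch2 α chambers).filter
          (fun C => (∀ x ∈ C, 0 < (α I).eval x) ∧ ∀ x ∈ C, (α J).eval x < 0)
        then Delta α r U X else 0) +
      (if X ∈ (ch2 α chambers).filter
          (fun C => (∀ x ∈ C, (α I).eval x < 0) ∧ ∀ x ∈ C, 0 < (α J).eval x)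
        then Delta α r U X else 0) := by
  simp only [dChain, Finsupp.add_apply, Finsupp.neg_apply, Finsupp.finsetSum_apply,
    Finsupp.single_apply, Finset.sum_ite_eq']

lemma dChain_apply_signSet_eq_zero (chambers : Finset (Set Pt)) (r : Fin n → ℂ) {I J : Fin n}
    (U : Set Pt) (hw : w ∈ SignSet α ε) (hIJ : ε I ↔ ε J) :
    dChain α chambers r I J U (SignSet α ε) = 0 := by
  simp only [dChain_apply, Finset.mem_filter, forall_mem_signSet_eval_pos_iff hw,
    forall_mem_signSet_eval_neg_iff hw, hIJ]
  simp

lemma dChain_apply_signSet_eq_neg_delta (chambers : Finset (Set Pt)) (r : Fin n → ℂ)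
    {I J : Fin n} (U : Set Pt) (hw : w ∈ SignSet α ε) (hC : SignSet α ε ∈ ch2 α chambers)
    (hI : ε I) (hJ : ¬ ε J) :
    dChain α chambers r I J U (SignSet α ε) = -Delta α r U (SignSet α ε) := by
  simp only [dChain_apply, Finset.mem_filter, forall_mem_signSet_eval_pos_iff hw,
    forall_mem_signSet_eval_neg_iff hw]
  simp [hC, hI, hJ]

lemma sum_smul_dChain_apply_signSet {ι : Type*} {s : Finset ι} (chambers : Finset (Set Pt))
    (r : Fin n → ℂ) (c : ι → ℂ) (I J : ι → Fin n) (U : ι → Set Pt) (hw : w ∈ SignSet α ε)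
    (hC : SignSet α ε ∈ ch2 α chambers) {i : ι} (hi : i ∈ s) (hI : ε (I i)) (hJ : ¬ ε (J i))
    (hother : ∀ p ∈ s, p ≠ i → c p = 0 ∨ (ε (I p) ↔ ε (J p))) :
    (∑ p ∈ s, c p • dChain α chambers r (I p) (J p) (U p)) (SignSet α ε) =
      -(c i * Delta α r (U i) (SignSet α ε)) := by
  rw [Finsupp.finsetSum_apply, Finset.sum_eq_single_of_mem i hi]
  · rw [Finsupp.smul_apply, dChain_apply_signSet_eq_neg_delta _ _ _ hw hC hI hJ, smul_eq_mul,
      mul_neg]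
  · intro p hp hpi
    rcases hother p hp hpi with hc | hIJ
    · rw [hc, zero_smul, Finsupp.coe_zero, Pi.zero_apply]
    · rw [Finsupp.smul_apply, dChain_apply_signSet_eq_zero _ _ _ hw hIJ, smul_zero]

end SignSet

namespace GoodCoords

variable {α : Fin n → AffForm} {a : Fin n → ℝ}

lemma eval_axis (hco : GoodCoords α a) (k : Fin n) (t : ℝ) :
    (α k).eval (t, 0) = (α k).a * (t - a k) := by
  have hk : ((a k : ℝ), (0 : ℝ)) ∈ (α k).line ∩ {p : Pt | p.2 = 0} := by
    rw [hco.2.1 k]; rfl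
  have hk0 : (α k).eval (a k, 0) = 0 := hk.1
  simp only [AffForm.eval, mul_zero, add_zero] at hk0 ⊢
  linear_combination hk0

lemma a_pos (hco : GoodCoords α a) (k : Fin n) : 0 < (α k).a := by
  have h := hco.2.2.2.2 k
  rw [hco.eval_axis] at h
  exact pos_of_mul_neg_left h (by linarith [hco.2.2.2.1 k])

lemma eval_axis_pos_iff (hco : GoodCoords α a) (k : Fin n) (t : ℝ) :
    0 < (α k).eval (t, 0) ↔ a k < t := by
  rw [hco.eval_axis, mul_pos_iff_of_pos_left (hco.a_pos k), sub_pos]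

lemma eval_axis_neg_iff (hco : GoodCoords α a) (k : Fin n) (t : ℝ) :
    (α k).eval (t, 0) < 0 ↔ t < a k := by
  rw [hco.eval_axis, ← neg_pos, ← mul_neg, mul_pos_iff_of_pos_left (hco.a_pos k), neg_sub,
    sub_pos]

/-- The intersection point of `H k` and `H u` lies above the axis, so walking from `(a u, 0)`
along `(α u).dir` (upwards, as `(α u).a > 0`) reaches `H k`: this forces the sign of the
cross term. -/
lemma cross_pos_iff (hco : GoodCoords α a) {k u : Fin n} (h : ¬ (α k).Parallel (α u)) :
    0 < (α k).cross (α u) ↔ u < k := by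
  have hD : (α k).cross (α u) ≠ 0 := fun h0 => h (((α k).cross_eq_zero_iff _).mp h0)
  set t := (α k).a * (a k - a u) / (α k).cross (α u)
  set P : Pt := (a u, 0) + t • (α u).dir
  have hPk : P ∈ (α k).line := by
    show (α k).eval P = 0
    rw [AffForm.eval_add_smul_dir, hco.eval_axis]
    simp only [t]
    field_simp
    ring
  have hPu : P ∈ (α u).line := by
    show (α u).eval P = 0
    rw [AffForm.eval_add_smul_dir, hco.eval_axis, ((α u).cross_eq_zero_iff _).mpr (.refl _)]
    ring
  have hku : k ≠ u := by rintro rfl; exact h (.refl _)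
  have hP2 : 0 < t * (α u).a := by simpa [P, AffForm.dir] using hco.1 k u hku P hPk hPu
  have ht : 0 < (a k - a u) / (α k).cross (α u) := by
    have := pos_of_mul_pos_left hP2 (hco.a_pos u).le
    simp only [t] at this
    rwa [mul_div_assoc, mul_pos_iff_of_pos_left (hco.a_pos k)] at this
  rw [← hco.2.2.1.lt_iff_lt]
  rcases div_pos_iff.mp ht with ⟨hs, hc⟩ | ⟨hs, hc⟩
  · exact iff_of_true hc (sub_pos.mp hs)
  · exact iff_of_false hc.not_gt (sub_neg.mp hs).not_gt

lemma cross_nonpos_of_lt (hco : GoodCoords α a) {k u : Fin n} (hk : k < u) :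
    (α k).cross (α u) ≤ 0 := by
  by_cases h : (α k).Parallel (α u)
  · exact (((α k).cross_eq_zero_iff _).mpr h).le
  · exact not_lt.mp fun hc => (hco.cross_pos_iff h).mp hc |>.asymm hk

lemma cross_nonneg_of_le (hco : GoodCoords α a) {k u : Fin n} (hk : u ≤ k) :
    0 ≤ (α k).cross (α u) := by
  by_cases h : (α k).Parallel (α u)
  · exact (((α k).cross_eq_zero_iff _).mpr h).ge
  · have hku : u < k := hk.lt_of_ne fun hu => h (hu ▸ .refl _)
    exact ((hco.cross_pos_iff h).mpr hku).le

lemma mem_strip_of_signs (hco : GoodCoords α a) {j k : Fin n} (hpar : (α j).Parallel (α k))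
    {x : Pt} (hj : 0 < (α j).eval x) (hk : (α k).eval x < 0) : x ∈ Strip (α j) (α k) := by
  intro q hq
  refine Or.inl ⟨hj, ?_⟩
  have hkq : (α k).eval q = 0 := hq
  have key : (α j).eval x * (α k).a - (α k).eval x * (α j).a
      = (α j).eval q * (α k).a - (α k).eval q * (α j).a := by
    simp only [AffForm.eval]
    unfold AffForm.Parallel at hpar
    linear_combination (q.2 - x.2) * hpar
  rw [hkq, zero_mul, sub_zero] at key
  have hgap : 0 < ((α j).eval q - (α j).eval x) * (α k).a := by
    nlinarith [mul_pos (neg_pos.mpr hk) (hco.a_pos j)]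
  linarith [pos_of_mul_pos_left hgap (hco.a_pos k).le]

lemma exists_axis_mem_upos (hco : GoodCoords α a) {l u : Fin n} (hlu : (l : ℕ) + 1 = u) :
    ∃ x : ℝ, ((x, 0) : Pt) ∈ Upos α u := by
  have hl : a l < a u := hco.2.2.1 (Fin.lt_def.mpr (by omega))
  refine ⟨(a l + a u) / 2, fun k => ?_⟩
  split_ifs with hk
  · have : a k ≤ a l := hco.2.2.1.monotone (Fin.le_def.mpr (by omega))
    rw [hco.eval_axis_pos_iff]; linarith
  · have : a u ≤ a k := hco.2.2.1.monotone (Fin.le_def.mpr (by omega))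
    rw [hco.eval_axis_neg_iff]; linarith

lemma add_smul_neg_dir_mem_upos (hco : GoodCoords α a) {u : Fin n} {x t : ℝ}
    (hx : ((x, 0) : Pt) ∈ Upos α u) (ht : 0 ≤ t) :
    ((x, 0) : Pt) + t • -(α u).dir ∈ Upos α u := by
  intro k
  have hxk := hx k
  rw [smul_neg, ← neg_smul, AffForm.eval_add_smul_dir]
  split_ifs at hxk ⊢ with hk
  · nlinarith [hco.cross_nonpos_of_lt (Fin.lt_def.mpr hk)]
  · nlinarith [hco.cross_nonneg_of_le (Fin.le_def.mpr (not_lt.mp hk))]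

end GoodCoords

/-- Along `(x, 0) + t • (α u).dir` a line parallel to `H u` keeps the sign it has at `(x, 0)`,
and any other line `H k` eventually takes the sign of its cross term with `H u`. -/
def topSigns (α : Fin n → AffForm) (u : Fin n) : Fin n → Prop := fun k =>
  if (α k).Parallel (α u) then (k : ℕ) < u else (u : ℕ) < k

section TopChamber

variable {α : Fin n → AffForm} {l u : Fin n}

lemma topSigns_self : ¬ topSigns α u u := by
  simp [topSigns, AffForm.Parallel.refl]

lemma topSigns_of_parallel_of_lt (hpar : (α l).Parallel (α u)) (hlu : (l : ℕ) < u) :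
    topSigns α u l := by
  simpa only [topSigns, if_pos hpar] using hlu

lemma topSigns_iff_of_parallel {j k : Fin n} (hjk : (k : ℕ) = j + 1)
    (hpar : (α j).Parallel (α k)) (hku : (k : ℕ) ≠ u) : topSigns α u j ↔ topSigns α u k := by
  by_cases h : (α k).Parallel (α u)
  · simp only [topSigns, if_pos h, if_pos (hpar.trans h)]
    omega
  · have hj : (j : ℕ) ≠ u := fun hju => h (Fin.ext hju ▸ hpar.symm)
    simp only [topSigns, if_neg h, if_neg fun hj' => h (hpar.symm.trans hj')]
    omega

lemma IsArrangement.signSet_topSigns_ne_upos (hA : IsArrangement α) (hlu : (l : ℕ) + 1 = u)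
    (hpar : (α l).Parallel (α u)) {w : Pt} (hw : w ∈ SignSet α (topSigns α u)) (p : ℕ) :
    SignSet α (topSigns α u) ≠ Upos α p := by
  intro hCp
  have h := signs_iff_of_mem_signSet hw (upos_eq_signSet α p ▸ hCp ▸ hw)
  have hl := (h l).mp (topSigns_of_parallel_of_lt hpar (by omega))
  have hu := mt (h u).mpr topSigns_self
  obtain ⟨k₀, hk₀⟩ := hA.exists_not_parallel u
  have hk₀u : (k₀ : ℕ) ≠ u := fun h' => hk₀ (Fin.ext h' ▸ .refl _)
  have hk₀p := h k₀
  simp only [topSigns, if_neg hk₀] at hk₀p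
  omega

lemma GoodCoords.eventually_mem_signSet_topSigns {a : Fin n → ℝ} (hco : GoodCoords α a)
    {x : ℝ} (hx : ((x, 0) : Pt) ∈ Upos α u) :
    ∀ᶠ t : ℝ in atTop, ((x, 0) : Pt) + t • (α u).dir ∈ SignSet α (topSigns α u) := by
  rw [upos_eq_signSet] at hx
  simp only [SignSet, Set.mem_ofPred_eq, eventually_all, AffForm.eval_add_smul_dir]
  intro k
  by_cases hpar : (α k).Parallel (α u)
  · have hε : topSigns α u k ↔ (k : ℕ) < u := by simp only [topSigns, if_pos hpar]
    rw [((α k).cross_eq_zero_iff _).mpr hpar]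
    refine Eventually.of_forall fun t => ?_
    split_ifs with hk
    · simpa using (eval_pos_iff_of_mem_signSet hx k).mpr (hε.mp hk)
    · simpa using (eval_neg_iff_of_mem_signSet hx k).mpr (mt hε.mpr hk)
  · have hε : topSigns α u k ↔ (u : ℕ) < k := by simp only [topSigns, if_neg hpar]
    split_ifs with hk
    · exact eventually_pos_add_mul ((hco.cross_pos_iff hpar).mpr (hε.mp hk))
    · refine eventually_add_mul_neg (lt_of_le_of_ne (not_lt.mp fun hc => hk ?_) ?_)
      · exact hε.mpr ((hco.cross_pos_iff hpar).mp hc)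
      · exact fun h0 => hpar (((α k).cross_eq_zero_iff _).mp h0)

lemma GoodCoords.signSet_subset_strip {a : Fin n → ℝ} (hco : GoodCoords α a)
    {ε : Fin n → Prop} {j k : Fin n} (hpar : (α j).Parallel (α k)) (hj : ε j) (hk : ¬ ε k) :
    SignSet α ε ⊆ Strip (α j) (α k) := fun _ hx =>
  hco.mem_strip_of_signs hpar ((eval_pos_iff_of_mem_signSet hx j).mpr hj)
    ((eval_neg_iff_of_mem_signSet hx k).mpr hk)

lemma GoodCoords.upos_subset_strip {a : Fin n → ℝ} (hco : GoodCoords α a)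
    (hlu : (l : ℕ) + 1 = u) (hpar : (α l).Parallel (α u)) : Upos α u ⊆ Strip (α l) (α u) := by
  rw [upos_eq_signSet]
  exact hco.signSet_subset_strip hpar (by omega) (lt_irrefl _)

lemma GoodCoords.signSet_topSigns_subset_strip {a : Fin n → ℝ} (hco : GoodCoords α a)
    (hlu : (l : ℕ) + 1 = u) (hpar : (α l).Parallel (α u)) :
    SignSet α (topSigns α u) ⊆ Strip (α l) (α u) :=
  hco.signSet_subset_strip hpar (topSigns_of_parallel_of_lt hpar (by omega)) topSigns_self

lemma isChamber_upos {p : ℕ} {y : Pt} (hy : y ∈ Upos α p) : IsChamber α (Upos α p) := by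
  rw [upos_eq_signSet] at hy ⊢
  exact isChamber_signSet hy

lemma GoodCoords.not_isBounded_upos {a : Fin n → ℝ} (hco : GoodCoords α a) {x : ℝ}
    (hx : ((x, 0) : Pt) ∈ Upos α u) : ¬ IsBounded (Upos α u) :=
  not_isBounded_of_eventually_mem (neg_ne_zero.mpr (α u).dir_ne_zero)
    ((eventually_ge_atTop 0).mono fun _ ht => hco.add_smul_neg_dir_mem_upos hx ht)

end TopChamber

open Fin.NatCast in
theorem statement6_general {m : ℕ} (α : Fin (m + 2) → AffForm) (a : Fin (m + 2) → ℝ)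
    (hA : IsArrangement α) (hco : GoodCoords α a)
    (chambers : Finset (Set Pt)) (hch : ∀ C : Set Pt, C ∈ chambers ↔ IsChamber α C)
    (r : Fin (m + 2) → ℂ)
    (c : ℕ → ℂ)
    (hker : ∑ p ∈ Finset.Icc 1 (m + 1),
      c p • dChain α chambers r ↑(p - 1) ↑p (Upos α p) = 0)
    (hc0 : ∀ p ∈ Finset.Icc 1 (m + 1), ¬ (α ↑(p - 1)).Parallel (α ↑p) → c p = 0)
    (i : ℕ) (hi1 : 1 ≤ i) (hin : i ≤ m + 1)
    (hpar : (α ↑(i - 1)).Parallel (α ↑i))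
    (hnonres : ∀ C1 C2 : Set Pt, IsChamber α C1 → IsChamber α C2 →
      C1 ⊆ Strip (α ↑(i - 1)) (α ↑i) → C2 ⊆ Strip (α ↑(i - 1)) (α ↑i) →
      ¬ Bornology.IsBounded C1 → ¬ Bornology.IsBounded C2 → C1 ≠ C2 →
      Delta α r C1 C2 ≠ 0) :
    c i = 0 := by
  have hval : ∀ p ≤ m + 1, ((p : Fin (m + 2)) : ℕ) = p := fun p hp =>
    Fin.val_cast_of_lt (by omega)
  have hlu : (((i - 1 : ℕ) : Fin (m + 2)) : ℕ) + 1 = (i : Fin (m + 2)) := by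
    rw [hval _ (by omega), hval i hin]; omega
  obtain ⟨x, hx⟩ := hco.exists_axis_mem_upos hlu
  have hray := hco.eventually_mem_signSet_topSigns hx
  obtain ⟨w, hw⟩ := hray.exists
  set C := SignSet α (topSigns α i)
  have hCU : ∀ p, C ≠ Upos α p := hA.signSet_topSigns_ne_upos hlu hpar hw
  have hΔ : Delta α r (Upos α i) C ≠ 0 := by
    rw [← hval i hin]
    exact hnonres _ _ (isChamber_upos hx) (isChamber_signSet hw) (hco.upos_subset_strip hlu hpar)
      (hco.signSet_topSigns_subset_strip hlu hpar) (hco.not_isBounded_upos hx)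
      (not_isBounded_of_eventually_mem (α _).dir_ne_zero hray) (hCU _).symm
  have hC : C ∈ ch2 α chambers :=
    Finset.mem_filter.mpr ⟨(hch C).mpr (isChamber_signSet hw), fun p _ => hCU p⟩
  have hcoeff := sum_smul_dChain_apply_signSet chambers r c (fun p => ((p - 1 : ℕ) : Fin (m + 2)))
    (fun p => (p : Fin (m + 2))) (Upos α) hw hC (Finset.mem_Icc.mpr ⟨hi1, hin⟩)
    (topSigns_of_parallel_of_lt hpar (by omega)) topSigns_self fun p hp hpi => by
      obtain ⟨hp1, hpn⟩ := Finset.mem_Icc.mp hp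
      by_cases hpp : (α ↑(p - 1)).Parallel (α ↑p)
      · refine Or.inr (topSigns_iff_of_parallel ?_ hpp ?_)
        · rw [hval p hpn, hval _ (by omega)]; omega
        · rw [hval p hpn, hval i hin]; exact hpi
      · exact Or.inl (hc0 p hp hpp)
  rw [hker, Finsupp.coe_zero, Pi.zero_apply, eq_comm, neg_eq_zero] at hcoeff
  exact (mul_eq_zero.mp hcoeff).resolve_right hΔ

open Fin.NatCast in
/-- (`n = m + 2` lines, `1`-indexed as `H_p ↔ α ↑(p-1)`.) Assume
`q_∞ ≠ 1`. Let `φ = Σ_{p=1}^{n−1} c_p·[U_p] ∈ V` satisfy `d(φ) = 0`, and assume `c_p = 0`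
for every `p` such that `H_p` and `H_{p+1}` are not parallel. If `H_i` and `H_{i+1}` are
parallel and the band bounded by `H_i` and `H_{i+1}` is not resonant (i.e.
`Δ(U_1, U_2) ≠ 0` for its two unbounded chambers), then `c_i = 0`. -/
theorem statement6 {m : ℕ} (α : Fin (m + 2) → AffForm) (a : Fin (m + 2) → ℝ)
    (hA : IsArrangement α) (hco : GoodCoords α a)
    (chambers : Finset (Set Pt)) (hch : ∀ C : Set Pt, C ∈ chambers ↔ IsChamber α C)
    (q r : Fin (m + 2) → ℂ) (hq : ∀ i, q i ≠ 0) (hr0 : ∀ i, r i ≠ 0)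
    (hrq : ∀ i, r i ^ 2 = q i)
    (hqinf : (∏ i, q i)⁻¹ ≠ 1)
    (c : ℕ → ℂ)
    (hker : ∑ p ∈ Finset.Icc 1 (m + 1),
      c p • dChain α chambers r ↑(p - 1) ↑p (Upos α p) = 0)
    (hc0 : ∀ p ∈ Finset.Icc 1 (m + 1), ¬ (α ↑(p - 1)).Parallel (α ↑p) → c p = 0)
    (i : ℕ) (hi1 : 1 ≤ i) (hin : i ≤ m + 1)
    (hpar : (α ↑(i - 1)).Parallel (α ↑i))
    (hnonres : ∀ C1 C2 : Set Pt, IsChamber α C1 → IsChamber α C2 →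
      C1 ⊆ Strip (α ↑(i - 1)) (α ↑i) → C2 ⊆ Strip (α ↑(i - 1)) (α ↑i) →
      ¬ Bornology.IsBounded C1 → ¬ Bornology.IsBounded C2 → C1 ≠ C2 →
      Delta α r C1 C2 ≠ 0) :
    c i = 0 :=
  statement6_general α a hA hco chambers hch r c hker hc0 i hi1 hin hpar hnonres
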